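/- arXiv:1804.01411 — 2 statements merged into one kernel-verified Lean document; each statement's English description precedes it below -/
import Mathlib

section
/- For the van der Waals pressure p(τ) = RT/(τ−b) − a/τ² with constants a,b,R > 0, if the temperature satisfies T > 8a/(27Rb), then p is strictly decreasing on (b, ∞). -/
/-!
The derivative of `p` is `2a/τ³ - RT/(τ-b)²`, so `p` decreases as long as `2a(τ-b)² < RTτ³`.
The function `(τ-b)²/τ³` attains its maximum `4/(27b)` on `(b, ∞)` at `τ = 3b`, so this holds for
every `τ > b` as soon as `27bRT > 8a`, which is the condition `T > T_c`.
-/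

noncomputable def vdwPressure (a b R T τ : ℝ) : ℝ := R * T / (τ - b) - a / τ ^ 2

-- `4x³ - 27b(x-b)² = (x-3b)²(4x-3b)`
lemma twentySeven_mul_mul_sub_sq_le_four_mul_pow_three {b x : ℝ} (hbx : 3 * b ≤ 4 * x) :
    27 * b * (x - b) ^ 2 ≤ 4 * x ^ 3 := by
  nlinarith [mul_nonneg (sq_nonneg (x - 3 * b)) (sub_nonneg.mpr hbx)]

lemma hasDerivAt_vdwPressure (a b R T : ℝ) {x : ℝ} (hxb : x ≠ b) (hx : x ≠ 0) :
    HasDerivAt (vdwPressure a b R T) (2 * a / x ^ 3 - R * T / (x - b) ^ 2) x := by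
  have hattr : HasDerivAt (fun τ => R * T / (τ - b)) (-(R * T) / (x - b) ^ 2) x := by
    simpa using (hasDerivAt_const x (R * T)).fun_div ((hasDerivAt_id x).sub_const b)
      (sub_ne_zero.mpr hxb)
  have hrep : HasDerivAt (fun τ => a / τ ^ 2) (-(2 * a) / x ^ 3) x := by
    refine ((hasDerivAt_const x a).fun_div (hasDerivAt_pow 2 x) (pow_ne_zero 2 hx)).congr_deriv ?_
    field_simp
    ring
  exact (hattr.sub hrep).congr_deriv (by ring)

lemma vdwPressure_deriv_neg {a b R T x : ℝ} (ha : 0 ≤ a) (hb : 0 < b) (hbx : b < x)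
    (hsuper : 8 * a < 27 * b * (R * T)) :
    2 * a / x ^ 3 - R * T / (x - b) ^ 2 < 0 := by
  have hx : 0 < x := hb.trans hbx
  rw [sub_neg, div_lt_div_iff₀ (by positivity) (pow_pos (sub_pos.mpr hbx) 2)]
  have hcubic : 27 * b * (x - b) ^ 2 ≤ 4 * x ^ 3 :=
    twentySeven_mul_mul_sub_sq_le_four_mul_pow_three (by linarith)
  suffices 27 * b * (2 * a * (x - b) ^ 2) < 27 * b * (R * T * x ^ 3) by
    exact lt_of_mul_lt_mul_left this (by positivity)
  calc 27 * b * (2 * a * (x - b) ^ 2) = 2 * a * (27 * b * (x - b) ^ 2) := by ring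
    _ ≤ 2 * a * (4 * x ^ 3) := by gcongr
    _ = 8 * a * x ^ 3 := by ring
    _ < 27 * b * (R * T) * x ^ 3 := by gcongr
    _ = 27 * b * (R * T * x ^ 3) := by ring

lemma strictAntiOn_vdwPressure {a b R T : ℝ} (ha : 0 ≤ a) (hb : 0 < b)
    (hsuper : 8 * a < 27 * b * (R * T)) :
    StrictAntiOn (vdwPressure a b R T) (Set.Ioi b) := by
  have hderiv : ∀ x ∈ Set.Ioi b,
      HasDerivAt (vdwPressure a b R T) (2 * a / x ^ 3 - R * T / (x - b) ^ 2) x :=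
    fun x hx => hasDerivAt_vdwPressure a b R T (ne_of_gt hx) (hb.trans hx).ne'
  refine strictAntiOn_of_hasDerivWithinAt_neg (convex_Ioi b)
    (f' := fun x => 2 * a / x ^ 3 - R * T / (x - b) ^ 2) (fun x hx => (hderiv x hx).continuousAt.continuousWithinAt) ?_ ?_ <;> rw [interior_Ioi]
  · exact fun x hx => (hderiv x hx).hasDerivWithinAt
  · exact fun x hx => vdwPressure_deriv_neg ha hb hx hsuper

/-- For the van der Waals pressure `p τ = R*T/(τ-b) - a/τ²` with `a, b, R > 0`,
if `T > 8a/(27Rb)` then `p` is strictly decreasing on `(b, ∞)`. -/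
theorem vdw_strictAnti_of_supercritical
    (a b R T : ℝ) (ha : 0 < a) (hb : 0 < b) (hR : 0 < R)
    (hT : T > 8 * a / (27 * R * b)) :
    StrictAntiOn (fun τ : ℝ => R * T / (τ - b) - a / τ ^ 2) (Set.Ioi b) := by
  have hsuper : 8 * a < 27 * b * (R * T) := by
    rw [gt_iff_lt, div_lt_iff₀ (by positivity)] at hT
    linarith
  exact strictAntiOn_vdwPressure ha.le hb hsuper
end

section
/- For the van der Waals pressure p(τ) = RT/(τ−b) − a/τ² with a,b,R > 0 and temperature T < 8a/(27Rb), there exist b < τ₁ < τ₂ such that p'(τ) > 0 for all τ ∈ (τ₁, τ₂); i.e., p is not monotone on (b,∞). -/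
/-!
The derivative of `p` is `2a/τ³ - RT/(τ-b)²`. At `τ = 3b` it equals `(8a - 27RbT)/(108b³)`, which is
positive exactly below the critical temperature, and by continuity it stays positive on an
interval `(3b, τ₂)`.
-/

namespace VanDerWaals

noncomputable def pressureDeriv (a b c τ : ℝ) : ℝ := 2 * a / τ ^ 3 - c / (τ - b) ^ 2

variable {a b c τ : ℝ}

theorem hasDerivAt_pressure (hτb : τ ≠ b) (hτ : τ ≠ 0) :
    HasDerivAt (fun τ => c / (τ - b) - a / τ ^ 2) (pressureDeriv a b c τ) τ := by
  have hsub : τ - b ≠ 0 := sub_ne_zero.mpr hτb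
  have hrep := (hasDerivAt_const τ c).div ((hasDerivAt_id' τ).sub_const b) hsub
  have hatt := (hasDerivAt_const τ a).div (hasDerivAt_pow 2 τ) (pow_ne_zero 2 hτ)
  refine (hrep.sub hatt).congr_deriv ?_
  rw [pressureDeriv]
  field_simp
  ring

theorem continuousAt_pressureDeriv (hτb : τ ≠ b) (hτ : τ ≠ 0) :
    ContinuousAt (pressureDeriv a b c) τ := by
  have hsub : τ - b ≠ 0 := sub_ne_zero.mpr hτb
  unfold pressureDeriv
  fun_prop (disch := positivity)

theorem pressureDeriv_three_mul_pos (hb : 0 < b) (hsubcrit : 27 * b * c < 8 * a) :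
    0 < pressureDeriv a b c (3 * b) := by
  have hval : pressureDeriv a b c (3 * b) = (8 * a - 27 * b * c) / (108 * b ^ 3) := by
    unfold pressureDeriv
    field_simp
    ring
  rw [hval]
  exact div_pos (by linarith) (by positivity)

end VanDerWaals

open VanDerWaals in
theorem vdw_not_monotone_of_subcritical_general
    (a b R T : ℝ) (hb : 0 < b) (hR : 0 < R)
    (hT : T < 8 * a / (27 * R * b)) :
    ∃ τ₁ τ₂ : ℝ, b < τ₁ ∧ τ₁ < τ₂ ∧
      ∀ τ ∈ Set.Ioo τ₁ τ₂,
        0 < deriv (fun τ : ℝ => R * T / (τ - b) - a / τ ^ 2) τ := by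
  have hsubcrit : 27 * b * (R * T) < 8 * a := by
    have := (lt_div_iff₀ (by positivity)).mp hT
    linarith
  have hpos := pressureDeriv_three_mul_pos hb hsubcrit
  have hcont : ContinuousAt (pressureDeriv a b (R * T)) (3 * b) :=
    continuousAt_pressureDeriv (by linarith) (by positivity)
  obtain ⟨τ₂, hτ₂, hIoo⟩ :=
    mem_nhdsGT_iff_exists_Ioo_subset.mp (nhdsWithin_le_nhds (hcont.eventually (lt_mem_nhds hpos)))
  refine ⟨3 * b, τ₂, by linarith, hτ₂, fun τ hτ => ?_⟩
  have hbτ : b < τ := by linarith [hτ.1]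
  rw [(hasDerivAt_pressure hbτ.ne' (by linarith)).deriv]
  exact hIoo hτ

/-- For the van der Waals pressure with `T < 8a/(27Rb)` there is an interval
`(τ₁, τ₂) ⊆ (b, ∞)` on which `p' > 0`; in particular `p` is not monotone on `(b, ∞)`. -/
theorem vdw_not_monotone_of_subcritical
    (a b R T : ℝ) (ha : 0 < a) (hb : 0 < b) (hR : 0 < R) (hTpos : 0 < T)
    (hT : T < 8 * a / (27 * R * b)) :
    ∃ τ₁ τ₂ : ℝ, b < τ₁ ∧ τ₁ < τ₂ ∧
      ∀ τ ∈ Set.Ioo τ₁ τ₂,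
        0 < deriv (fun τ : ℝ => R * T / (τ - b) - a / τ ^ 2) τ :=
  vdw_not_monotone_of_subcritical_general a b R T hb hR hT
end
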